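/- arXiv:1008.1659 — 2 statements merged into one kernel-verified Lean document; each statement's English description precedes it below -/
import Mathlib

section
/- The star root of P_q satisfies ∛P_q := P_q \ (P_q²·P_q*) = (P_q \ {q_0}*) ∪ {q_0}, and this set is contained in {q_0} ∪ { v : v ⊑ q and |q_0| + |v| > |q| }. -/
/-!
Elements of `P_q` are the nonempty prefixes of `q` whose length is a period of `q`. If
`u, v ∈ P_q` with `|u| < |v|` and `|u| + |v| ≤ |q|`, then `|v| - |u|` is again a period, so
`v = u·w` with `w ∈ P_q`. Descending from `v` in steps of `q₀` shows that every `v ∈ P_q` with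
`|q₀| + |v| ≤ |q|` is a power of `q₀`. In a factorisation of `v ∈ P_q` into two or more elements
of `P_q` every factor has length at most `|v| - |q₀|`, so all factors, and hence `v`, are powers
of `q₀`; and the only power of `q₀` in the star root is `q₀` itself.
-/

/-- `u ^ n` for lists: concatenation of `n` copies of `u`. -/
def listPow {X : Type*} (u : List X) : ℕ → List X
  | 0 => []
  | n+1 => u ++ listPow u n

/-- `P_q = { v : e ⊏ v ⊑ q ⊏ v·q }`. -/
def Pq {X : Type*} (q : List X) : Set (List X) :=
  {v | v ≠ [] ∧ v <+: q ∧ q <+: v ++ q}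

/-- membership in the submonoid `P^*` generated by `P`. -/
def InStar {X : Type*} (P : Set (List X)) (w : List X) : Prop :=
  ∃ l : List (List X), (∀ v ∈ l, v ∈ P) ∧ w = l.flatten

/-- A finite word `w` is quasiperiodic with quasiperiod `q`. -/
def QuasiPeriodic {X : Type*} (q w : List X) : Prop :=
  ∀ j < w.length, ∃ u : List X, u.length ≤ j ∧ j < u.length + q.length ∧ (u ++ q) <+: w

/-- `Q_q`: the set of finite words quasiperiodic with quasiperiod `q`. -/
def Qq {X : Type*} (q : List X) : Set (List X) := {w | QuasiPeriodic q w}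

/-- `u` is a (finite) prefix of the infinite word `ξ`. -/
def InfPrefix {X : Type*} (ξ : ℕ → X) (u : List X) : Prop :=
  u = (List.range u.length).map ξ

/-- An infinite word `ξ` is quasiperiodic with quasiperiod `q`. -/
def QuasiPeriodicInf {X : Type*} (q : List X) (ξ : ℕ → X) : Prop :=
  ∀ j : ℕ, ∃ u : List X, u.length ≤ j ∧ j < u.length + q.length ∧ InfPrefix ξ (u ++ q)

/-- the star root `P \ (P²·P*)`. -/
def StarRoot {X : Type*} (P : Set (List X)) : Set (List X) :=
  {v | v ∈ P ∧ ¬ ∃ (a b : List X) (l : List (List X)),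
    a ∈ P ∧ b ∈ P ∧ (∀ x ∈ l, x ∈ P) ∧ v = a ++ b ++ l.flatten}

/-- `ξ ∈ P^ω`: infinite concatenation of nonempty words of `P`. -/
def InOmega {X : Type*} (P : Set (List X)) (ξ : ℕ → X) : Prop :=
  ∃ f : ℕ → List X, (∀ i, f i ∈ P ∧ f i ≠ []) ∧
    ∀ n, InfPrefix ξ ((List.range n).map f).flatten

section

open List

variable {X : Type*}

def IsPeriod (q : List X) (p : ℕ) : Prop :=
  ∀ i (h : p + i < q.length), q[p + i] = q[i]

lemma drop_prefix_iff_isPeriod {q : List X} {p : ℕ} : q.drop p <+: q ↔ IsPeriod q p := by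
  simp only [prefix_iff_getElem, length_drop, getElem_drop, IsPeriod]
  exact ⟨fun ⟨_, h⟩ i hi => h i (by omega), fun h => ⟨by omega, fun i hi => h i (by omega)⟩⟩

lemma IsPeriod.sub {q : List X} {p p' : ℕ} (h : IsPeriod q p) (h' : IsPeriod q p')
    (hle : p ≤ p') (hlen : p + p' ≤ q.length) : IsPeriod q (p' - p) := by
  intro i hi
  by_cases hi' : p' + i < q.length
  · have e := h (p' - p + i) (by omega)
    simp only [show p + (p' - p + i) = p' + i by omega] at e
    rw [← e, h' i hi']
  · have e := h (i - p) (by omega)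
    have e' := h' (i - p) (by omega)
    simp only [show p + (i - p) = i by omega] at e
    simp only [show p' + (i - p) = p' - p + i by omega] at e'
    rw [e', e]

lemma mem_Pq_iff {q v : List X} : v ∈ Pq q ↔ v ≠ [] ∧ v <+: q ∧ IsPeriod q v.length := by
  refine and_congr_right fun _ => and_congr_right fun hv => ?_
  nth_rw 1 [← prefix_iff_eq_append.mp hv]
  rw [prefix_append_right_inj, drop_prefix_iff_isPeriod]

lemma take_add_of_isPeriod {q : List X} {p n : ℕ} (h : IsPeriod q p) (hlen : p + n ≤ q.length) :
    q.take (p + n) = q.take p ++ q.take n := by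
  rw [take_add, prefix_iff_eq_take.mp (drop_prefix_iff_isPeriod.mpr h), take_take, length_drop,
    Nat.min_eq_left (by omega)]

lemma exists_mem_Pq_eq_append {q u v : List X} (hu : u ∈ Pq q) (hv : v ∈ Pq q)
    (hlt : u.length < v.length) (hlen : u.length + v.length ≤ q.length) :
    ∃ w ∈ Pq q, v = u ++ w := by
  rw [mem_Pq_iff] at hu hv
  obtain ⟨-, hu, hpu⟩ := hu
  obtain ⟨-, hv, hpv⟩ := hv
  refine ⟨q.take (v.length - u.length), mem_Pq_iff.mpr ⟨?_, take_prefix _ _, ?_⟩, ?_⟩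
  · exact ne_nil_of_length_pos (by simp only [length_take]; omega)
  · rw [length_take, Nat.min_eq_left (by omega)]
    exact hpu.sub hpv hlt.le hlen
  · calc v = q.take (u.length + (v.length - u.length)) := by
          rw [Nat.add_sub_cancel' hlt.le, ← prefix_iff_eq_take.mp hv]
      _ = u ++ q.take (v.length - u.length) := by
          rw [take_add_of_isPeriod hpu (by omega), ← prefix_iff_eq_take.mp hu]

lemma listPow_add (u : List X) (a b : ℕ) : listPow u (a + b) = listPow u a ++ listPow u b := by
  induction a with
  | zero => simp [listPow]
  | succ a ih => rw [Nat.add_right_comm]; simp [listPow, ih]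

lemma listPow_eq_flatten_replicate (u : List X) (m : ℕ) :
    listPow u m = (replicate m u).flatten := by
  induction m with
  | zero => rfl
  | succ m ih => simp [listPow, ih, replicate_succ]

lemma exists_flatten_eq_listPow {u : List X} {l : List (List X)}
    (h : ∀ x ∈ l, ∃ m, x = listPow u m) : ∃ m, l.flatten = listPow u m := by
  induction l with
  | nil => exact ⟨0, rfl⟩
  | cons x l ih =>
    obtain ⟨m, rfl⟩ := h x mem_cons_self
    obtain ⟨n, hn⟩ := ih fun y hy => h y (mem_cons_of_mem _ hy)
    exact ⟨m + n, by rw [flatten_cons, hn, listPow_add]⟩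

lemma mem_StarRoot_of_minimal {P : Set (List X)} {u : List X} (hu : u ∈ P) (hne : u ≠ [])
    (hmin : ∀ v ∈ P, u.length ≤ v.length) : u ∈ StarRoot P := by
  refine ⟨hu, fun ⟨a, b, l, ha, hb, _, hab⟩ => hne (eq_nil_of_length_eq_zero ?_)⟩
  have := congrArg length hab
  simp only [length_append] at this
  linarith [hmin a ha, hmin b hb]

lemma eq_of_mem_StarRoot_of_eq_listPow {P : Set (List X)} {u v : List X} {m : ℕ}
    (hv : v ∈ StarRoot P) (hne : v ≠ []) (hu : u ∈ P) (hm : v = listPow u m) : v = u := by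
  match m with
  | 0 => exact absurd hm hne
  | 1 => simpa [listPow] using hm
  | m + 2 =>
    refine absurd ⟨u, u, replicate m u, hu, hu, fun x hx => ?_, ?_⟩ hv.2
    · rwa [eq_of_mem_replicate hx]
    · simp [hm, listPow, listPow_eq_flatten_replicate]

lemma exists_eq_listPow_of_mem_Pq {q q0 v : List X} (h0 : q0 ∈ Pq q)
    (hmin : ∀ v ∈ Pq q, q0.length ≤ v.length) (hv : v ∈ Pq q)
    (hlen : q0.length + v.length ≤ q.length) : ∃ m, v = listPow q0 m := by
  induction hn : v.length using Nat.strong_induction_on generalizing v with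
  | _ n ih =>
    rcases (hmin v hv).eq_or_lt with heq | hlt
    · have hq0v : q0 = v := (prefix_of_prefix_length_le h0.2.1 hv.2.1 heq.le).eq_of_length heq
      exact ⟨1, by simp [listPow, hq0v]⟩
    · obtain ⟨w, hw, rfl⟩ := exists_mem_Pq_eq_append h0 hv hlt (by omega)
      have := length_pos_iff.mpr h0.1
      simp only [length_append] at hn hlen
      obtain ⟨m, rfl⟩ := ih w.length (by omega) hw (by omega) rfl
      exact ⟨m + 1, rfl⟩

lemma exists_eq_listPow_of_not_mem_StarRoot {q q0 v : List X} (h0 : q0 ∈ Pq q)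
    (hmin : ∀ v ∈ Pq q, q0.length ≤ v.length) (hv : v ∈ Pq q)
    (hroot : v ∉ StarRoot (Pq q)) : ∃ m, v = listPow q0 m := by
  obtain ⟨a, b, l, ha, hb, hl, rfl⟩ : ∃ (a b : List X) (l : List (List X)),
      a ∈ Pq q ∧ b ∈ Pq q ∧ (∀ x ∈ l, x ∈ Pq q) ∧ v = a ++ b ++ l.flatten := by
    simpa [StarRoot, hv] using hroot
  have hq := hv.2.1.length_le
  simp only [length_append] at hq
  have hma := hmin a ha
  have hmb := hmin b hb
  obtain ⟨i, rfl⟩ := exists_eq_listPow_of_mem_Pq h0 hmin ha (by omega)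
  obtain ⟨j, rfl⟩ := exists_eq_listPow_of_mem_Pq h0 hmin hb (by omega)
  obtain ⟨k, hk⟩ := exists_flatten_eq_listPow fun x hx =>
    exists_eq_listPow_of_mem_Pq h0 hmin (hl x hx)
      (by have := (sublist_flatten_of_mem hx).length_le; omega)
  exact ⟨i + j + k, by rw [hk, listPow_add, listPow_add]⟩

end

theorem stmt12_general {X : Type*} (q : List X) (q0 : List X)
    (h0 : q0 ∈ Pq q) (hmin : ∀ v ∈ Pq q, q0.length ≤ v.length) :
    StarRoot (Pq q) = (Pq q \ {v : List X | ∃ m : ℕ, v = listPow q0 m}) ∪ {q0} ∧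
    StarRoot (Pq q) ⊆
      insert q0 {v : List X | v <+: q ∧ q.length < q0.length + v.length} := by
  have hq0 : q0 ∈ StarRoot (Pq q) := mem_StarRoot_of_minimal h0 h0.1 hmin
  have hpow : ∀ v ∈ StarRoot (Pq q), ∀ m, v = listPow q0 m → v = q0 := fun v hv _ =>
    eq_of_mem_StarRoot_of_eq_listPow hv hv.1.1 h0
  refine ⟨Set.ext fun v => ⟨fun hv => ?_, ?_⟩, fun v hv => ?_⟩
  · by_cases hv' : ∃ m, v = listPow q0 m
    · obtain ⟨m, hm⟩ := hv'
      exact Or.inr (hpow v hv m hm)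
    · exact Or.inl ⟨hv.1, hv'⟩
  · rintro (⟨hv, hv'⟩ | rfl)
    · by_contra hroot
      exact hv' (exists_eq_listPow_of_not_mem_StarRoot h0 hmin hv hroot)
    · exact hq0
  · refine or_iff_not_imp_left.mpr fun hne => ⟨hv.1.2.1, ?_⟩
    by_contra! hlen
    obtain ⟨m, hm⟩ := exists_eq_listPow_of_mem_Pq h0 hmin hv.1 hlen
    exact hne (hpow v hv m hm)

/-- `∛P_q = (P_q \ {q₀}^*) ∪ {q₀} ⊆ {q₀} ∪ {v : v ⊑ q ∧ |q₀| + |v| > |q|}`. -/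
theorem stmt12 {X : Type*} (q : List X) (hq : q ≠ []) (q0 : List X)
    (h0 : q0 ∈ Pq q) (hmin : ∀ v ∈ Pq q, q0.length ≤ v.length) :
    StarRoot (Pq q) = (Pq q \ {v : List X | ∃ m : ℕ, v = listPow q0 m}) ∪ {q0} ∧
    StarRoot (Pq q) ⊆
      insert q0 {v : List X | v <+: q ∧ q.length < q0.length + v.length} :=
  stmt12_general q q0 h0 hmin
end

section
/- If q = q_0^k · q̄ with q̄ a proper prefix of q_0, then the star root of P_q is a code with delay of decipherability at most k+1: for all v, v', w_1, ..., w_{k+1}, w'_1, ..., w'_{k+1} in the star root of P_q, if v·w_1⋯w_{k+1} and v'·w'_1⋯w'_{k+1} are comparable with respect to the prefix order, then v = v'. -/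
/-!
Suppose `v ⊏ v'` are both in the star root and `v·w₁⋯w_{k+1}`, `v'·w'₁⋯w'_{k+1}` are
comparable; write `v' = v·s`. Every `x ∈ P_q` satisfies `q ⊑ x·q` and `|x| ≥ |q₀|`, so a
product of `k + 1` such words is longer than `q = q₀^k·q̄` and begins with `q`. Cancelling `v`,
the word `s·w'₁⋯w'_{k+1}` then begins with both `q` and `s·q`, i.e. `q ⊑ s·q`, so `s ∈ P_q`
and `v' = v·s ∈ P_q²`, which is excluded from the star root.
-/

lemma length_listPow {X : Type*} (u : List X) : ∀ n, (listPow u n).length = n * u.length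
  | 0 => by simp [listPow]
  | n + 1 => by simp [listPow, length_listPow u n]; ring

lemma length_lt_of_eq_listPow_append {X : Type*} {q q0 qb : List X} {k : ℕ}
    (hk : q = listPow q0 k ++ qb) (hqb : qb <+: q0) (hqbne : qb ≠ q0) :
    q.length < (k + 1) * q0.length := by
  have hlt : qb.length < q0.length :=
    lt_of_le_of_ne hqb.length_le fun h => hqbne (hqb.eq_of_length h)
  rw [hk, List.length_append, length_listPow]
  linarith

lemma List.prefix_of_prefix_of_comparable {X : Type*} {q A B : List X}
    (hAB : A <+: B ∨ B <+: A) (hA : q <+: A) (hlen : q.length ≤ B.length) : q <+: B := by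
  rcases hAB with hAB | hBA
  · exact hA.trans hAB
  · exact List.prefix_of_prefix_length_le hA hBA hlen

lemma List.length_mul_le_length_flatten {X : Type*} {l : List (List X)} {m : ℕ}
    (hl : ∀ x ∈ l, m ≤ x.length) : l.length * m ≤ l.flatten.length := by
  rw [List.length_flatten]
  simpa using List.card_nsmul_le_sum (l.map List.length) m (by simpa using hl)

lemma starRoot_subset {X : Type*} (P : Set (List X)) : StarRoot P ⊆ P := fun _ hv => hv.1

lemma append_notMem_starRoot {X : Type*} {P : Set (List X)} {a b : List X}
    (ha : a ∈ P) (hb : b ∈ P) : a ++ b ∉ StarRoot P :=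
  fun h => h.2 ⟨a, b, [], ha, hb, by simp, by simp⟩

section Pq

variable {X : Type*} {q : List X}

lemma prefix_flatten_append_of_forall_mem_Pq :
    ∀ {l : List (List X)}, (∀ x ∈ l, x ∈ Pq q) → q <+: l.flatten ++ q
  | [], _ => List.prefix_refl q
  | a :: l, hl => by
    have hrest : a ++ q <+: a ++ (l.flatten ++ q) :=
      (List.prefix_append_right_inj a).mpr
        (prefix_flatten_append_of_forall_mem_Pq fun x hx => hl x (by simp [hx]))
    simpa using (hl a (by simp)).2.2.trans hrest

lemma prefix_flatten_of_forall_mem_Pq {l : List (List X)} (hl : ∀ x ∈ l, x ∈ Pq q)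
    (hlen : q.length ≤ l.flatten.length) : q <+: l.flatten :=
  List.prefix_of_prefix_length_le (prefix_flatten_append_of_forall_mem_Pq hl)
    (List.prefix_append _ _) hlen

lemma mem_Pq_of_comparable {v s W W' : List X} (hv : q <+: v ++ q) (hvs : v ++ s <+: q)
    (hs : s ≠ []) (hW : q <+: W) (hW' : q <+: W')
    (hcomp : v ++ W <+: v ++ s ++ W' ∨ v ++ s ++ W' <+: v ++ W) : s ∈ Pq q := by
  have hsq : s <+: q := (List.prefix_append_right_inj v).mp (hvs.trans hv)
  have hcomp' : W <+: s ++ W' ∨ s ++ W' <+: W := by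
    simpa only [List.append_assoc, List.prefix_append_right_inj] using hcomp
  have hq_sW' : q <+: s ++ W' :=
    List.prefix_of_prefix_of_comparable hcomp' hW
      (by simpa using hW'.length_le.trans (Nat.le_add_left _ _))
  have hsq_sW' : s ++ q <+: s ++ W' := (List.prefix_append_right_inj s).mpr hW'
  exact ⟨hs, hsq, List.prefix_of_prefix_length_le hq_sW' hsq_sW' (by simp)⟩

end Pq

theorem stmt14_general {X : Type*} (q q0 qb : List X)
    (hmin : ∀ v ∈ Pq q, q0.length ≤ v.length)
    (k : ℕ) (hk : q = listPow q0 k ++ qb) (hqb : qb <+: q0) (hqbne : qb ≠ q0) :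
    ∀ v ∈ StarRoot (Pq q), ∀ v' ∈ StarRoot (Pq q),
      ∀ w w' : List (List X), w.length = k + 1 → w'.length = k + 1 →
        (∀ x ∈ w, x ∈ StarRoot (Pq q)) → (∀ x ∈ w', x ∈ StarRoot (Pq q)) →
        (v ++ w.flatten <+: v' ++ w'.flatten ∨ v' ++ w'.flatten <+: v ++ w.flatten) →
        v = v' := by
  have hprefix : ∀ u : List (List X), u.length = k + 1 → (∀ x ∈ u, x ∈ StarRoot (Pq q)) →
      q <+: u.flatten := fun u hu huS =>
    have huP : ∀ x ∈ u, x ∈ Pq q := fun x hx => starRoot_subset _ (huS x hx)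
    prefix_flatten_of_forall_mem_Pq huP <| by
      have := List.length_mul_le_length_flatten fun x hx => hmin x (huP x hx)
      rw [hu] at this
      exact (length_lt_of_eq_listPow_append hk hqb hqbne).le.trans this
  intro v hv v' hv' w w' hw hw' hwS hwS' hcomp
  wlog hle : v.length ≤ v'.length generalizing v v' w w'
  · exact (this v' hv' v hv w' w hw' hw hwS' hwS hcomp.symm (le_of_not_ge hle)).symm
  obtain ⟨s, rfl⟩ := List.prefix_of_prefix_length_le hv.1.2.1 hv'.1.2.1 hle
  rcases eq_or_ne s [] with rfl | hs
  · simp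
  have hsP : s ∈ Pq q := mem_Pq_of_comparable hv.1.2.2 hv'.1.2.1 hs
    (hprefix w hw hwS) (hprefix w' hw' hwS') hcomp
  exact absurd hv' (append_notMem_starRoot hv.1 hsP)

/-- If `q = q₀^k·q̄`, `q̄ ⊏ q₀`, then the star root of `P_q` has delay of
decipherability at most `k + 1`. -/
theorem stmt14 {X : Type*} (q q0 qb : List X) (hq : q ≠ [])
    (h0 : q0 ∈ Pq q) (hmin : ∀ v ∈ Pq q, q0.length ≤ v.length)
    (k : ℕ) (hk : q = listPow q0 k ++ qb) (hqb : qb <+: q0) (hqbne : qb ≠ q0) :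
    ∀ v ∈ StarRoot (Pq q), ∀ v' ∈ StarRoot (Pq q),
      ∀ w w' : List (List X), w.length = k + 1 → w'.length = k + 1 →
        (∀ x ∈ w, x ∈ StarRoot (Pq q)) → (∀ x ∈ w', x ∈ StarRoot (Pq q)) →
        (v ++ w.flatten <+: v' ++ w'.flatten ∨ v' ++ w'.flatten <+: v ++ w.flatten) →
        v = v' :=
  stmt14_general q q0 qb hmin k hk hqb hqbne
end
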